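/- Let A be a Hopf algebra over a field k. The vector space A ⊗_k A with the left A-action a·(x ⊗ y) = Σ a₁x ⊗ yS(a₂) (that is, L(A^e), the left adjoint action on the enveloping algebra regarded as an A-bimodule) is a free left A-module. -/

import Mathlib

/-!
STATEMENT 11: Let `A` be a Hopf algebra over `k`.  The vector space `A ⊗ A` with the
left adjoint action `a·(x ⊗ y) = Σ a₁x ⊗ y S(a₂)` (that is, `L(A^e)`) is a free left
`A`-module.
-/

open TensorProduct

noncomputable section

variable (k A : Type) [Field k] [Ring A] [HopfAlgebra k A]

/-- The left adjoint action of `A` on `A ⊗ A` (i.e. on `A^e` regarded as an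
`A`-bimodule):  `a · (x ⊗ y) = Σ a₁x ⊗ y S(a₂)`. -/
def adAct : A →ₗ[k] ((A ⊗[k] A) →ₗ[k] (A ⊗[k] A)) :=
  (TensorProduct.homTensorHomMap (RingHom.id k) A A A A) ∘ₗ
    (TensorProduct.map (LinearMap.mul k A)
      ((LinearMap.mul k A).flip ∘ₗ HopfAlgebra.antipode k)) ∘ₗ Coalgebra.comul

/-
For a representation `ρ : H →ₐ End M` of a Hopf algebra, the map `x ⊗ m ↦ Σ x₁ ⊗ ρ(x₂) m` on
`H ⊗ M` turns left multiplication on the first factor into the diagonal action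
`a · (x ⊗ m) = Σ a₁x ⊗ ρ(a₂) m`. It is invertible, with inverse `x ⊗ m ↦ Σ x₁ ⊗ ρ(S x₂) m`,
because `ρ ∘ S` is the convolution inverse of `ρ`. So the diagonal module is isomorphic to
`H ⊗ M` with `H` acting on the left factor only, which is free on any basis of `M`.
`L(A^e)` is the diagonal module for `M = A` and `ρ(a) y = y S(a)`, a representation because `S`
is an anti-homomorphism.
-/

universe v

open Coalgebra HopfAlgebra LinearMap WithConv

section Twist

variable {R C M : Type*} [CommSemiring R] [AddCommMonoid C] [Module R C] [Coalgebra R C]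
  [AddCommMonoid M] [Module R M]

def twistBy (σ : C →ₗ[R] Module.End R M) : C ⊗[R] M →ₗ[R] C ⊗[R] M :=
  (lift σ).lTensor C ∘ₗ (TensorProduct.assoc R C C M).toLinearMap ∘ₗ comul.rTensor M

lemma twistBy_tmul (σ : C →ₗ[R] Module.End R M) {ι : Type*} {c : C} (r : Repr R c ι) (m : M) :
    twistBy σ (c ⊗ₜ m) = ∑ i ∈ r.index, r.left i ⊗ₜ σ (r.right i) m := by
  simp [twistBy, ← r.eq, sum_tmul]

lemma twistBy_one : twistBy (1 : WithConv (C →ₗ[R] Module.End R M)).ofConv = LinearMap.id := by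
  ext c m
  simp only [AlgebraTensorModule.curry_apply, curry_apply, restrictScalars_self, id_apply]
  rw [twistBy_tmul _ (ℛ R c)]
  simp only [convOne_apply, Module.algebraMap_end_apply]
  simpa only [map_sum, lTensor_tmul, toSpanSingleton_apply, one_smul, tmul_smul] using
    congr((toSpanSingleton R M m).lTensor C $(sum_tmul_counit_eq (ℛ R c)))

lemma twistBy_comp_twistBy (σ τ : C →ₗ[R] Module.End R M) :
    twistBy σ ∘ₗ twistBy τ = twistBy (toConv σ * toConv τ).ofConv := by
  ext c m
  have coassoc := congr((applyₗ m ∘ₗ mul' R _ ∘ₗ map σ τ).lTensor C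
    $(sum_tmul_tmul_eq (ℛ R c) (fun i ↦ ℛ R ((ℛ R c).left i)) (fun i ↦ ℛ R ((ℛ R c).right i))))
  simp only [map_sum, lTensor_tmul, comp_apply, map_tmul, mul'_apply, applyₗ_apply_apply,
    Module.End.mul_apply] at coassoc
  simp only [AlgebraTensorModule.curry_apply, curry_apply, restrictScalars_self, comp_apply]
  rw [twistBy_tmul _ (ℛ R c), map_sum, twistBy_tmul _ (ℛ R c)]
  simp_rw [twistBy_tmul _ (ℛ R _), coassoc, (ℛ R _).convMul_apply, LinearMap.sum_apply, tmul_sum,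
    Module.End.mul_apply]

def twistEquiv (u : (WithConv (C →ₗ[R] Module.End R M))ˣ) : C ⊗[R] M ≃ₗ[R] C ⊗[R] M :=
  .ofLinearMap (twistBy u.val.ofConv) (twistBy u⁻¹.val.ofConv)
    (by rw [twistBy_comp_twistBy, toConv_ofConv, toConv_ofConv, u.mul_inv, twistBy_one])
    (by rw [twistBy_comp_twistBy, toConv_ofConv, toConv_ofConv, u.inv_mul, twistBy_one])

end Twist

section Bialgebra

variable {R H M : Type*} [CommSemiring R] [Semiring H] [Bialgebra R H]
  [AddCommMonoid M] [Module R M]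

def diagonalAction (ρ : H →ₐ[R] Module.End R M) : H →ₗ[R] Module.End R (H ⊗[R] M) :=
  homTensorHomMap (RingHom.id R) H M H M ∘ₗ map (mul R H) ρ.toLinearMap ∘ₗ comul

lemma diagonalAction_tmul (ρ : H →ₐ[R] Module.End R M) {ι : Type*} {a : H} (r : Repr R a ι)
    (x : H) (m : M) :
    diagonalAction ρ a (x ⊗ₜ m) = ∑ i ∈ r.index, (r.left i * x) ⊗ₜ ρ (r.right i) m := by
  simp [diagonalAction, ← r.eq, LinearMap.sum_apply]

lemma twistBy_smul (ρ : H →ₐ[R] Module.End R M) (a : H) (z : H ⊗[R] M) :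
    twistBy ρ.toLinearMap (a • z) = diagonalAction ρ a (twistBy ρ.toLinearMap z) := by
  induction z using TensorProduct.induction_on with
  | zero => simp
  | add z w hz hw => rw [smul_add, map_add, map_add, map_add, hz, hw]
  | tmul x m =>
    rw [smul_tmul', smul_eq_mul, twistBy_tmul _ ((ℛ R a).mul (ℛ R x)), twistBy_tmul _ (ℛ R x),
      map_sum, Repr.mul_index, Finset.sum_product, Finset.sum_comm]
    refine Finset.sum_congr rfl fun j _ ↦ ?_
    simp [diagonalAction_tmul _ (ℛ R a)]

end Bialgebra

section Hopf

variable {R H A : Type*} [CommSemiring R] [Semiring H] [HopfAlgebra R H] [Semiring A] [Algebra R A]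

def convUnitOfAlgHom (ρ : H →ₐ[R] A) : (WithConv (H →ₗ[R] A))ˣ where
  val := toConv ρ.toLinearMap
  inv := toConv (ρ.toLinearMap ∘ₗ antipode R)
  val_inv := by
    ext h
    simp [(ℛ R h).convMul_apply, ← map_mul, ← map_sum, sum_mul_antipode_eq_algebraMap_counit]
  inv_val := by
    ext h
    simp [(ℛ R h).convMul_apply, ← map_mul, ← map_sum, sum_antipode_mul_eq_algebraMap_counit]

theorem exists_finsupp_linearEquiv_diagonalAction {M : Type v} [AddCommMonoid M] [Module R M]
    [Module.Free R M] (ρ : H →ₐ[R] Module.End R M) :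
    ∃ (ι : Type v) (e : (ι →₀ H) ≃ₗ[R] H ⊗[R] M),
      ∀ (a : H) (f : ι →₀ H), e (a • f) = diagonalAction ρ a (e f) := by
  let b := Algebra.TensorProduct.basis H (Module.Free.chooseBasis R M)
  refine ⟨_, (b.repr.symm.restrictScalars R).trans (twistEquiv (convUnitOfAlgHom ρ)), fun a f ↦ ?_⟩
  simp only [LinearEquiv.trans_apply, LinearEquiv.restrictScalars_apply, map_smul]
  exact twistBy_smul ρ a _

variable (R H) in
def mulRightAntipode : H →ₐ[R] Module.End R H :=
  (Algebra.lsmul R R H).comp (antipodeAlgHomOp R H)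

end Hopf

lemma adAct_eq_diagonalAction : adAct k A = diagonalAction (mulRightAntipode k A) := rfl

/-- `L(A^e)` is a free left `A`-module. -/
theorem adjoint_Ae_free :
    ∃ (ι : Type) (e : (ι →₀ A) ≃ₗ[k] (A ⊗[k] A)),
      ∀ (a : A) (f : ι →₀ A), e (a • f) = adAct k A a (e f) := by
  rw [adAct_eq_diagonalAction]
  exact exists_finsupp_linearEquiv_diagonalAction _

end
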